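/- Let M be a positive integer and let ε, u be real numbers with 0 < 2ε ≤ u ≤ 1 − 2ε and ε ≤ 1/4. Then C(M, ⌊uM⌋)·u^{⌊uM⌋}·(1 − u)^{M − ⌊uM⌋} ≥ C(M, ⌊2εM⌋)·(2ε)^M, where C(M, k) denotes the binomial coefficient. -/

import Mathlib

/-!
The bound compares the two sides factor by factor. Since `2ε ≤ u` and `2ε ≤ 1 - u`, each of the
`M` factors of `(2ε)^M` is dominated by the matching factor of `u^k (1-u)^(M-k)`, `k = ⌊uM⌋`.
For the binomial coefficients, `j = ⌊2εM⌋` satisfies `j ≤ k` and `j + k ≤ M`, i.e. `j` lies at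
least as far from the middle `M/2` as `k`, and `C(M, ·)` is unimodal and symmetric about `M/2`.
-/

namespace Nat

theorem choose_le_choose_of_le_of_two_mul_le {n j k : ℕ} (hjk : j ≤ k) (hk : 2 * k ≤ n) :
    n.choose j ≤ n.choose k := by
  induction k, hjk using Nat.le_induction with
  | base => rfl
  | succ k _ ih =>
    exact (ih (by omega)).trans (choose_le_succ_of_lt_half_left (by omega))

theorem choose_le_choose_of_le_of_add_le {n j k : ℕ} (hjk : j ≤ k) (hn : j + k ≤ n) :
    n.choose j ≤ n.choose k := by
  rcases le_or_gt (2 * k) n with hk | hk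
  · exact choose_le_choose_of_le_of_two_mul_le hjk hk
  · rw [← choose_symm (by omega : k ≤ n)]
    exact choose_le_choose_of_le_of_two_mul_le (by omega) (by omega)

end Nat

theorem pow_le_pow_mul_pow_sub {R : Type*} [CommSemiring R] [PartialOrder R]
    [IsOrderedRing R] {a x y : R} {k n : ℕ} (ha : 0 ≤ a) (hx : a ≤ x) (hy : a ≤ y)
    (hk : k ≤ n) : a ^ n ≤ x ^ k * y ^ (n - k) := by
  rw [← pow_mul_pow_sub a hk]
  exact mul_le_mul (pow_le_pow_left₀ ha hx k) (pow_le_pow_left₀ ha hy _) (pow_nonneg ha _)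
    (pow_nonneg (ha.trans hx) k)

theorem binomial_mode_lower_bound
    (M : ℕ) (ε u : ℝ)
    (hε : 0 < ε)
    (h1 : 2 * ε ≤ u) (h2 : u ≤ 1 - 2 * ε) :
    (M.choose ⌊2 * ε * (M : ℝ)⌋₊ : ℝ) * (2 * ε) ^ M ≤
      (M.choose ⌊u * (M : ℝ)⌋₊ : ℝ) * u ^ ⌊u * (M : ℝ)⌋₊ *
        (1 - u) ^ (M - ⌊u * (M : ℝ)⌋₊) := by
  set j := ⌊2 * ε * (M : ℝ)⌋₊
  set k := ⌊u * (M : ℝ)⌋₊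
  have hM : (0 : ℝ) ≤ M := M.cast_nonneg
  have hj : (j : ℝ) ≤ 2 * ε * M := Nat.floor_le (by positivity)
  have hk : (k : ℝ) ≤ u * M := Nat.floor_le (by nlinarith)
  have hjk : j ≤ k := Nat.floor_le_floor (by nlinarith)
  have hjkM : j + k ≤ M := by exact_mod_cast (show (j + k : ℝ) ≤ M by nlinarith)
  have hchoose : (M.choose j : ℝ) ≤ M.choose k := by
    exact_mod_cast Nat.choose_le_choose_of_le_of_add_le hjk hjkM
  have hpow : (2 * ε) ^ M ≤ u ^ k * (1 - u) ^ (M - k) :=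
    pow_le_pow_mul_pow_sub (by positivity) h1 (by linarith) (by omega)
  rw [mul_assoc]
  exact mul_le_mul hchoose hpow (by positivity) (by positivity)
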